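/- Let T, S be partial isometries on a complex Hilbert space H. Then T + λS is a partial isometry for every complex λ with |λ| = 1 if and only if T* S = 0 and T S* = 0. -/

import Mathlib

/-!
For `|λ| = 1` the cube `(T + λS)(T + λS)*(T + λS)` equals `T + λS` plus a defect
`λ Q + λ̄ U + R + λ² P` with `Q, U, R, P` independent of `λ`. Averaging it over
`λ ∈ {1, -1, i, -i}` isolates the constant term `R = T S* S + S S* T`, which must therefore
vanish. Multiplying `R = 0` on the right by `S*` gives `T S* = -(S S*) T S*`, and since `S S*`
is idempotent this forces `T S* = 0`; the same argument for `T*, S*` gives `T* S = 0`. Conversely, orthogonality kills all four defect terms.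
-/

open ContinuousLinearMap

def IsPartialIsometry {A : Type*} [Mul A] [Star A] (a : A) : Prop :=
  a * star a * a = a

section Semigroup

variable {A : Type*} [Semigroup A] [StarMul A]

protected theorem IsPartialIsometry.star {a : A} (ha : IsPartialIsometry a) :
    IsPartialIsometry (star a) := by
  unfold IsPartialIsometry at *
  simpa only [star_mul, star_star, mul_assoc] using congrArg star ha

theorem IsPartialIsometry.mul_star_mul_star {a : A} (ha : IsPartialIsometry a) :
    a * star a * (a * star a) = a * star a := by
  rw [← mul_assoc, ha]

end Semigroup

section StarRing

variable {A : Type*} [Ring A] [StarRing A]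

theorem IsPartialIsometry.mul_star_eq_zero_of_add_eq_zero [Module ℂ A] {t s : A}
    (hs : IsPartialIsometry s)
    (h : t * star s * s + s * star s * t = 0) : t * star s = 0 := by
  have hss : star s * s * star s = star s := by
    simpa only [IsPartialIsometry, star_star] using hs.star
  have hfb : s * star s * (t * star s) = -(t * star s) := by
    have h' : (t * star s * s + s * star s * t) * star s = 0 := by rw [h, zero_mul]
    rwa [add_mul, mul_assoc (t * star s), mul_assoc t, ← mul_assoc (star s) s, hss,
      mul_assoc (s * star s) t, add_comm, add_eq_zero_iff_eq_neg] at h'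
  have hb : t * star s = -(t * star s) := calc
    t * star s = -(s * star s * (t * star s)) := by rw [hfb, neg_neg]
    _ = -(s * star s * (s * star s * (t * star s))) := by
      rw [← mul_assoc (s * star s) (s * star s), hs.mul_star_mul_star]
    _ = -(t * star s) := by rw [hfb, mul_neg, neg_neg, hfb]
  have h2 : (2 : ℂ) • (t * star s) = 0 := by
    rw [two_smul]
    nth_rw 2 [hb]
    exact add_neg_cancel _
  exact (smul_eq_zero.mp h2).resolve_left two_ne_zero

theorem IsPartialIsometry.add_smul_cube [Algebra ℂ A] [StarModule ℂ A] {t s : A}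
    (ht : IsPartialIsometry t) (hs : IsPartialIsometry s) {l : ℂ} (hl : ‖l‖ = 1) :
    (t + l • s) * star (t + l • s) * (t + l • s) =
      t + l • s + (l • (t * star t * s + s * star t * t) + (starRingEnd ℂ l) • (t * star s * t)
        + (t * star s * s + s * star s * t) + (l * l) • (s * star t * s)) := by
  have hl' : starRingEnd ℂ l * l = 1 := by
    rw [Complex.conj_mul', hl]; norm_num
  unfold IsPartialIsometry at ht hs
  simp only [star_add, star_smul, RCLike.star_def, mul_add, add_mul, smul_mul_assoc,
    mul_smul_comm, ht, hs]
  linear_combination (norm := module) hl' • (t * star s * s + s * star s * t + l • s)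

end StarRing

theorem eq_zero_of_forall_norm_eq_one_smul_add {M : Type*} [AddCommGroup M] [Module ℂ M]
    {q u r p : M}
    (h : ∀ l : ℂ, ‖l‖ = 1 → l • q + starRingEnd ℂ l • u + r + (l * l) • p = 0) : r = 0 := by
  have h4 : (4 : ℂ) • r = 0 := by
    have hsum := congrArg₂ (· + ·) (congrArg₂ (· + ·) (h 1 (by simp)) (h (-1) (by simp)))
      (congrArg₂ (· + ·) (h Complex.I (by simp)) (h (-Complex.I) (by simp)))
    simp only [map_one, map_neg, Complex.conj_I, neg_neg, mul_neg, neg_mul, Complex.I_mul_I,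
      add_zero] at hsum
    rw [← hsum]
    module
  exact (smul_eq_zero.mp h4).resolve_left (by norm_num)

theorem stmt_5 {H : Type*} [NormedAddCommGroup H] [InnerProductSpace ℂ H]
    [CompleteSpace H] (T S : H →L[ℂ] H)
    (hT : T * adjoint T * T = T) (hS : S * adjoint S * S = S) :
    (∀ lam : ℂ, ‖lam‖ = 1 →
        (T + lam • S) * adjoint (T + lam • S) * (T + lam • S) = T + lam • S) ↔
      (adjoint T * S = 0 ∧ T * adjoint S = 0) := by
  simp only [← star_eq_adjoint] at hT hS ⊢
  change IsPartialIsometry T at hT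
  change IsPartialIsometry S at hS
  constructor
  · intro h
    have hR : T * star S * S + S * star S * T = 0 :=
      eq_zero_of_forall_norm_eq_one_smul_add fun l hl =>
        add_eq_left.mp ((hT.add_smul_cube hS hl).symm.trans (h l hl))
    have hR' : star T * star (star S) * star S + star S * star (star S) * star T = 0 := by
      simpa only [star_add, star_mul, star_star, star_zero, mul_assoc, add_comm]
        using congrArg star hR
    exact ⟨by simpa using hS.star.mul_star_eq_zero_of_add_eq_zero hR',
      hS.mul_star_eq_zero_of_add_eq_zero hR⟩
  · rintro ⟨hTS, hST⟩ l hl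
    have hST' : S * star T = 0 := by simpa using congrArg star hST
    have hTS' : star S * T = 0 := by simpa using congrArg star hTS
    rw [hT.add_smul_cube hS hl]
    simp [mul_assoc, hTS, hST, hST', hTS']
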